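/- arXiv:2207.09151 — 8 statements merged into one kernel-verified Lean document; each statement's English description precedes it below -/
import Mathlib

section
/- Let G be a permutation group acting on an infinite set X that separates X. Then for every finite subset Y ⊂ X, every orbit of the pointwise stabilizer stab_G(Y) on X \ Y is infinite. -/
/-! If the orbit `O` of `p` under the pointwise stabilizer of `Y` were finite, separation would give
an element `g` fixing `Y ∪ (O \ {p})` and moving `p`. But `g • p` lies in `O \ {p}`, so `g` fixes
`g • p`, which forces `g • p = p`. -/

theorem stmt1_general {G X : Type*} [Group G] [MulAction G X]
    (hsep : ∀ Y : Set X, Y.Finite → ∀ p ∉ Y,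
      ∃ g : G, (∀ y ∈ Y, g • y = y) ∧ g • p ≠ p) :
    ∀ Y : Set X, Y.Finite → ∀ p ∉ Y,
      Set.Infinite {x : X | ∃ g : G, (∀ y ∈ Y, g • y = y) ∧ g • p = x} := by
  intro Y hY p hp
  set O := {x : X | ∃ g : G, (∀ y ∈ Y, g • y = y) ∧ g • p = x}
  by_contra hO
  have hO_finite : O.Finite := Set.not_infinite.mp hO
  obtain ⟨g, hg_fix, hg_move⟩ := hsep (Y ∪ (O \ {p})) (hY.union hO_finite.sdiff) p (by simp [hp])
  have hgp : g • p ∈ O \ {p} := ⟨⟨g, fun y hy => hg_fix y (Or.inl hy), rfl⟩, hg_move⟩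
  exact hg_move (smul_left_cancel g (hg_fix (g • p) (Or.inr hgp)))

/-- If a permutation group `G` acting on an infinite set `X` separates `X`
(for every finite `Y ⊂ X` the pointwise stabilizer of `Y` fixes no point outside `Y`),
then for every finite `Y ⊂ X` every orbit of the pointwise stabilizer of `Y` on
`X \ Y` is infinite. -/
theorem stmt1 {G X : Type*} [Group G] [MulAction G X] [Infinite X]
    (hsep : ∀ Y : Set X, Y.Finite → ∀ p ∉ Y,
      ∃ g : G, (∀ y ∈ Y, g • y = y) ∧ g • p ≠ p) :
    ∀ Y : Set X, Y.Finite → ∀ p ∉ Y,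
      Set.Infinite {x : X | ∃ g : G, (∀ y ∈ Y, g • y = y) ∧ g • p = x} :=
  stmt1_general hsep
end

section
/- For a group G of homeomorphisms of a Hausdorff space X that hereditarily separates X, and for any open infinite subset Z ⊆ X, every orbit of the action of the pointwise stabilizer stab_G(X \ Z) on Z \ Fix(G) is infinite. -/
/-! If the orbit `O` of `p` were finite, hereditary separation applied to `Y = O \ {p}` would
give `g` fixing `X \ Z` and `O \ {p}` but moving `p`. Then `g • p ∈ O \ {p}` is fixed by `g`,
and cancelling `g` in `g • (g • p) = g • p` gives `g • p = p`. -/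

theorem smul_mem_of_forall_notMem_smul_eq {G X : Type*} [Group G] [MulAction G X]
    {Z : Set X} {g : G} (hg : ∀ y, y ∉ Z → g • y = y) {p : X} (hp : p ∈ Z) : g • p ∈ Z := by
  by_contra h
  rw [smul_left_cancel g (hg _ h)] at h
  exact h hp

theorem stmt5_general {G X : Type*} [Group G] [MulAction G X] [TopologicalSpace X]
    (hher : ∀ Z : Set X, IsOpen Z → Z.Infinite →
      ∀ Y : Set X, Y.Finite → Y ⊆ Z →
        ∀ p ∈ Z, p ∉ Y → p ∉ {x : X | ∀ g : G, g • x = x} →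
          ∃ g : G, (∀ x, x ∉ Z → g • x = x) ∧ (∀ x ∈ Y, g • x = x) ∧ g • p ≠ p) :
    ∀ Z : Set X, IsOpen Z → Z.Infinite →
      ∀ p ∈ Z, p ∉ {x : X | ∀ g : G, g • x = x} →
        Set.Infinite {x : X | ∃ g : G, (∀ y, y ∉ Z → g • y = y) ∧ g • p = x} := by
  intro Z hZ hZinf p hpZ hpfix
  set O := {x : X | ∃ g : G, (∀ y, y ∉ Z → g • y = y) ∧ g • p = x}
  have hOZ : O \ {p} ⊆ Z := by
    rintro _ ⟨⟨g, hg, rfl⟩, -⟩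
    exact smul_mem_of_forall_notMem_smul_eq hg hpZ
  intro hfin
  obtain ⟨g, hg_out, hg_fix, hg_move⟩ :=
    hher Z hZ hZinf (O \ {p}) hfin.sdiff hOZ p hpZ (fun h => h.2 rfl) hpfix
  exact hg_move (smul_left_cancel g (hg_fix _ ⟨⟨g, hg_out, rfl⟩, hg_move⟩))

/-- For a group `G` acting by homeomorphisms on a Hausdorff space `X`
with finite fixed-point set `Fix(G)`, if `G` hereditarily separates `X` then for any
open infinite `Z ⊆ X`, every orbit of the pointwise stabilizer of `X \ Z` on
`Z \ Fix(G)` is infinite. -/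
theorem stmt5 {G X : Type*} [Group G] [MulAction G X] [TopologicalSpace X] [T2Space X]
    (hcont : ∀ g : G, Continuous fun x : X => g • x)
    (hfix : Set.Finite {x : X | ∀ g : G, g • x = x})
    (hher : ∀ Z : Set X, IsOpen Z → Z.Infinite →
      ∀ Y : Set X, Y.Finite → Y ⊆ Z →
        ∀ p ∈ Z, p ∉ Y → p ∉ {x : X | ∀ g : G, g • x = x} →
          ∃ g : G, (∀ x, x ∉ Z → g • x = x) ∧ (∀ x ∈ Y, g • x = x) ∧ g • p ≠ p) :
    ∀ Z : Set X, IsOpen Z → Z.Infinite →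
      ∀ p ∈ Z, p ∉ {x : X | ∀ g : G, g • x = x} →
        Set.Infinite {x : X | ∃ g : G, (∀ y, y ∉ Z → g • y = y) ∧ g • p = x} :=
  stmt5_general hher
end

section
/- Every weakly branch group G acting on a rooted tree T hereditarily separates the boundary ∂T: for every open Z ⊆ ∂T, finite Y ⊂ Z and x ∈ Z \ Y, there exists g ∈ G fixing (∂T \ Z) ∪ Y pointwise with g(x) ≠ x. -/
/-- A permutation of the boundary `∂T = Π n, a n` of a spherically homogeneous rooted
tree (vertices at level `k` are elements of `Π i : Fin k, a i`) is tree-automorphism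
like if it preserves lengths of common prefixes of rays. -/
def TreeAutLike {a : ℕ → Type*} (g : Equiv.Perm (∀ n, a n)) : Prop :=
  ∀ x y : (∀ n, a n), ∀ k : ℕ,
    (∀ i < k, x i = y i) ↔ (∀ i < k, g x i = g y i)

/-- `G` acts spherically transitively: it is transitive on each level of the tree. -/
def SphericallyTransitive {a : ℕ → Type*} (G : Subgroup (Equiv.Perm (∀ n, a n))) : Prop :=
  ∀ (k : ℕ) (u v : ∀ i : Fin k, a i), ∃ g ∈ G,
    ∀ x : ∀ n, a n, (∀ i : Fin k, x i = u i) → (∀ i : Fin k, g x i = v i)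

/-- Every rigid vertex stabilizer contains a non-trivial element (weakly branch). -/
def RigidStabilizersNontrivial {a : ℕ → Type*} (G : Subgroup (Equiv.Perm (∀ n, a n))) : Prop :=
  ∀ (k : ℕ) (t : ∀ i : Fin k, a i), ∃ g ∈ G,
    (∀ x : ∀ n, a n, ¬ (∀ i : Fin k, x i = t i) → g x = x) ∧ g ≠ 1


/-!
Cut a cylinder `C` around `x` out of `Z \ Y`. A non-trivial `h ∈ G` supported on `C` moves some
ray `w ∈ C`, say at level `m`. By spherical transitivity some `f ∈ G` sends `x` into the cylinder
of `w` of depth `m + 1`; since this cylinder lies inside `C`, `f` preserves `C`, so the conjugate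
`f⁻¹ h f` is still supported on `C`, and it moves `x` because `h` moves every ray that agrees
with `w` up to level `m`.
-/

open PiNat

section

variable {a : ℕ → Type*}

theorem exists_cylinder_subset_of_isOpen [∀ n, TopologicalSpace (a n)]
    [∀ n, DiscreteTopology (a n)] {U : Set (∀ n, a n)} (hU : IsOpen U) {x : ∀ n, a n}
    (hx : x ∈ U) : ∃ k, cylinder x k ⊆ U := by
  obtain ⟨_, ⟨y, k, rfl⟩, hxy, hsub⟩ :=
    (isTopologicalBasis_cylinders a).exists_subset_of_mem_open hx hU
  exact ⟨k, (mem_cylinder_iff_eq.mp hxy).subset.trans hsub⟩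

theorem forall_fin_eq_iff_mem_cylinder {x y : ∀ n, a n} {k : ℕ} :
    (∀ i : Fin k, y i = x i) ↔ y ∈ cylinder x k :=
  ⟨fun h i hi => h ⟨i, hi⟩, fun h i => h i i.2⟩

theorem TreeAutLike.apply_mem_cylinder_iff {g : Equiv.Perm (∀ n, a n)} (hg : TreeAutLike g)
    {x y : ∀ n, a n} {k : ℕ} : g y ∈ cylinder (g x) k ↔ y ∈ cylinder x k :=
  (hg y x k).symm

theorem SphericallyTransitive.exists_apply_mem_cylinder {G : Subgroup (Equiv.Perm (∀ n, a n))}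
    (hst : SphericallyTransitive G) (k : ℕ) (x w : ∀ n, a n) :
    ∃ f ∈ G, f x ∈ cylinder w k := by
  obtain ⟨f, hfG, hf⟩ := hst k (fun i => x i) (fun i => w i)
  exact ⟨f, hfG, forall_fin_eq_iff_mem_cylinder.mp (hf x fun _ => rfl)⟩

theorem RigidStabilizersNontrivial.exists_ne_one_fixing_compl_cylinder
    {G : Subgroup (Equiv.Perm (∀ n, a n))} (hwb : RigidStabilizersNontrivial G)
    (x : ∀ n, a n) (k : ℕ) : ∃ h ∈ G, (∀ y ∉ cylinder x k, h y = y) ∧ h ≠ 1 := by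
  obtain ⟨h, hhG, hsupp, hne⟩ := hwb k (fun i => x i)
  exact ⟨h, hhG, fun y hy => hsupp y (mt forall_fin_eq_iff_mem_cylinder.mp hy), hne⟩

theorem Equiv.Perm.apply_mem_of_fixing_compl {α : Type*} {h : Equiv.Perm α} {S : Set α}
    (hsupp : ∀ y ∉ S, h y = y) {y : α} (hy : y ∈ S) : h y ∈ S := by
  by_contra hc
  exact hc (by rwa [h.injective (hsupp _ hc)])

theorem exists_apply_ne_of_ne_one_of_fixing_compl_cylinder {h : Equiv.Perm (∀ n, a n)}
    {x : ∀ n, a n} {k : ℕ} (hsupp : ∀ y ∉ cylinder x k, h y = y) (hne : h ≠ 1) :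
    ∃ w ∈ cylinder x k, ∃ m, k ≤ m ∧ h w m ≠ w m := by
  obtain ⟨w, hw⟩ : ∃ w, h w ≠ w := by
    by_contra! hc
    exact hne (Equiv.ext hc)
  have hwC : w ∈ cylinder x k := by
    by_contra hc
    exact hw (hsupp w hc)
  have hhwC : h w ∈ cylinder x k := Equiv.Perm.apply_mem_of_fixing_compl hsupp hwC
  obtain ⟨m, hm⟩ := Function.ne_iff.mp hw
  refine ⟨w, hwC, m, ?_, hm⟩
  by_contra! hmk
  exact hm ((mem_cylinder_iff.mp hhwC m hmk).trans (mem_cylinder_iff.mp hwC m hmk).symm)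

theorem exists_mem_fixing_compl_cylinder_apply_ne {G : Subgroup (Equiv.Perm (∀ n, a n))}
    (haut : ∀ g ∈ G, TreeAutLike g) (hst : SphericallyTransitive G) {x : ∀ n, a n} {k : ℕ}
    {h : Equiv.Perm (∀ n, a n)} (hhG : h ∈ G) (hsupp : ∀ y ∉ cylinder x k, h y = y)
    (hne : h ≠ 1) : ∃ g ∈ G, (∀ y ∉ cylinder x k, g y = y) ∧ g x ≠ x := by
  obtain ⟨w, hwC, m, hkm, hm⟩ := exists_apply_ne_of_ne_one_of_fixing_compl_cylinder hsupp hne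
  obtain ⟨f, hfG, hfx⟩ := hst.exists_apply_mem_cylinder (m + 1) x w
  have hCx : cylinder x k = cylinder (f x) k :=
    ((mem_cylinder_iff_eq.mp (cylinder_anti w (by omega) hfx)).trans
      (mem_cylinder_iff_eq.mp hwC)).symm
  have hfC : ∀ y, f y ∈ cylinder x k ↔ y ∈ cylinder x k := fun y =>
    (Set.ext_iff.mp hCx (f y)).trans (haut f hfG).apply_mem_cylinder_iff
  refine ⟨f⁻¹ * h * f, G.mul_mem (G.mul_mem (G.inv_mem hfG) hhG) hfG, fun y hy => ?_, ?_⟩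
  · simp [Equiv.Perm.mul_apply, hsupp (f y) (mt (hfC y).mp hy)]
  · have hhfx : h (f x) ∈ cylinder (h w) (m + 1) := (haut h hhG).apply_mem_cylinder_iff.mpr hfx
    intro hfix
    rw [Equiv.Perm.mul_apply, Equiv.Perm.mul_apply, Equiv.Perm.inv_eq_iff_eq] at hfix
    apply hm
    rw [← mem_cylinder_iff.mp hhfx m m.lt_succ_self, hfix, mem_cylinder_iff.mp hfx m m.lt_succ_self]

end

theorem stmt7_general {a : ℕ → Type*} [∀ n, TopologicalSpace (a n)] [∀ n, DiscreteTopology (a n)]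
    (G : Subgroup (Equiv.Perm (∀ n, a n)))
    (haut : ∀ g ∈ G, TreeAutLike g)
    (hst : SphericallyTransitive G)
    (hwb : RigidStabilizersNontrivial G) :
    ∀ Z : Set (∀ n, a n), IsOpen Z →
      ∀ Y : Set (∀ n, a n), Y.Finite → Y ⊆ Z →
        ∀ x ∈ Z, x ∉ Y →
          ∃ g ∈ G, (∀ y, y ∉ Z → g y = y) ∧ (∀ y ∈ Y, g y = y) ∧ g x ≠ x := by
  intro Z hZ Y hY _ x hxZ hxY
  obtain ⟨k, hk⟩ := exists_cylinder_subset_of_isOpen (hZ.sdiff hY.isClosed) ⟨hxZ, hxY⟩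
  obtain ⟨h, hhG, hsupp, hne⟩ := hwb.exists_ne_one_fixing_compl_cylinder x k
  obtain ⟨g, hgG, hgsupp, hgx⟩ := exists_mem_fixing_compl_cylinder_apply_ne haut hst hhG hsupp hne
  exact ⟨g, hgG, fun y hy => hgsupp y fun hyC => hy (hk hyC).1,
    fun y hy => hgsupp y fun hyC => (hk hyC).2 hy, hgx⟩

/-- A weakly branch group `G` acting on a rooted tree `T` hereditarily
separates the boundary `∂T` (with its natural product/cylinder topology): for every
open `Z ⊆ ∂T`, finite `Y ⊂ Z` and `x ∈ Z \ Y` there is `g ∈ G` fixing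
`(∂T \ Z) ∪ Y` pointwise with `g(x) ≠ x`. -/
theorem stmt7 {a : ℕ → Type*} [∀ n, TopologicalSpace (a n)] [∀ n, DiscreteTopology (a n)]
    (hne : ∀ n, Nonempty (a n))
    (G : Subgroup (Equiv.Perm (∀ n, a n)))
    (haut : ∀ g ∈ G, TreeAutLike g)
    (hst : SphericallyTransitive G)
    (hwb : RigidStabilizersNontrivial G) :
    ∀ Z : Set (∀ n, a n), IsOpen Z →
      ∀ Y : Set (∀ n, a n), Y.Finite → Y ⊆ Z →
        ∀ x ∈ Z, x ∉ Y →
          ∃ g ∈ G, (∀ y, y ∉ Z → g y = y) ∧ (∀ y ∈ Y, g y = y) ∧ g x ≠ x :=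
  stmt7_general G haut hst hwb
end

section
/- In a weakly branch group G on a rooted tree T, for every vertex t the rigid stabilizer R of t does not fix any infinite ray passing through t; i.e., for every boundary point x ∈ ∂T whose ray contains t, there exists g ∈ R with g(x) ≠ x. -/
/-!
A non-trivial element `r` of the rigid stabilizer of `t` moves some ray `z` through `t`, and
being tree-automorphism like it already moves it at some finite level `m`: every ray sharing
its first `m` letters with `z` is moved by `r`. By spherical transitivity some `h ∈ G` sends
the first `m` letters of `x` to those of `z`; then `h⁻¹ r h` moves `x`, and it still lies in
the rigid stabilizer of `t` because `h` maps the cylinder of `t` onto itself.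
-/

namespace Equiv.Perm

variable {α : Type*} {p : α → Prop}

theorem exists_apply_ne_self_of_fixed_off {r : Perm α} (hr : ∀ y, ¬ p y → r y = y)
    (hr1 : r ≠ 1) : ∃ z, p z ∧ r z ≠ z := by
  obtain ⟨z, hz⟩ := DFunLike.ne_iff.mp hr1
  exact ⟨z, not_not.mp fun hpz => hz (hr z hpz), hz⟩

theorem inv_mul_mul_apply_eq_self_of_fixed_off {r h : Perm α} (hr : ∀ y, ¬ p y → r y = y)
    (hh : ∀ y, p (h y) → p y) : ∀ y, ¬ p y → (h⁻¹ * r * h) y = y := by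
  intro y hy
  simp [hr (h y) (mt (hh y) hy)]

end Equiv.Perm

namespace TreeAutLike

variable {a : ℕ → Type*} {g : Equiv.Perm (∀ n, a n)}

theorem apply_ne_self_of_agree (hg : TreeAutLike g) {z w : ∀ n, a n} {n m : ℕ}
    (hn : g z n ≠ z n) (hnm : n < m) (hwz : ∀ i < m, w i = z i) : g w ≠ w := by
  intro hfix
  have hgwz : ∀ i < m, g w i = g z i := (hg w z m).mp hwz
  exact hn (by rw [← hgwz n hnm, hfix, hwz n hnm])

theorem mem_cylinder_of_apply_mem (hg : TreeAutLike g) {k : ℕ} {t : ∀ i : Fin k, a i}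
    {x y : ∀ n, a n} (hx : ∀ i : Fin k, x i = t i) (hgx : ∀ i : Fin k, g x i = t i)
    (hgy : ∀ i : Fin k, g y i = t i) : ∀ i : Fin k, y i = t i := by
  have hxy : ∀ i < k, x i = y i :=
    (hg x y k).mpr fun i hi => (hgx ⟨i, hi⟩).trans (hgy ⟨i, hi⟩).symm
  exact fun i => (hxy i i.isLt).symm.trans (hx i)

end TreeAutLike

theorem stmt8_general {a : ℕ → Type*}
    (G : Subgroup (Equiv.Perm (∀ n, a n)))
    (haut : ∀ g ∈ G, TreeAutLike g)
    (hst : SphericallyTransitive G)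
    (hwb : RigidStabilizersNontrivial G) :
    ∀ (k : ℕ) (t : ∀ i : Fin k, a i) (x : ∀ n, a n),
      (∀ i : Fin k, x i = t i) →
        ∃ g ∈ G, (∀ y : ∀ n, a n, ¬ (∀ i : Fin k, y i = t i) → g y = y) ∧ g x ≠ x := by
  intro k t x hx
  obtain ⟨r, hrG, hr, hr1⟩ := hwb k t
  obtain ⟨z, hzt, hrz⟩ := Equiv.Perm.exists_apply_ne_self_of_fixed_off hr hr1
  obtain ⟨n, hn⟩ := Function.ne_iff.mp hrz
  obtain ⟨h, hhG, hh⟩ := hst (max (n + 1) k) (fun i => x i) (fun i => z i)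
  have hhx : ∀ i < max (n + 1) k, h x i = z i := fun i hi => hh x (fun _ => rfl) ⟨i, hi⟩
  have hhxt : ∀ i : Fin k, h x i = t i := fun i =>
    (hhx i (lt_max_of_lt_right i.isLt)).trans (hzt i)
  refine ⟨h⁻¹ * r * h, mul_mem (mul_mem (inv_mem hhG) hrG) hhG,
    Equiv.Perm.inv_mul_mul_apply_eq_self_of_fixed_off hr
      fun y => (haut h hhG).mem_cylinder_of_apply_mem hx hhxt, fun hfix => ?_⟩
  have hrhx : r (h x) ≠ h x :=
    (haut r hrG).apply_ne_self_of_agree hn (lt_max_of_lt_left n.lt_succ_self) hhx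
  exact hrhx (by simpa using congrArg h hfix)

/-- In a weakly branch group `G` on a rooted tree `T`, for every vertex
`t` the rigid stabilizer of `t` fixes no infinite ray through `t`: for every boundary
point `x` whose ray passes through `t` there is `g` in the rigid stabilizer of `t`
(inside `G`) with `g(x) ≠ x`. -/
theorem stmt8 {a : ℕ → Type*} (hne : ∀ n, Nonempty (a n))
    (G : Subgroup (Equiv.Perm (∀ n, a n)))
    (haut : ∀ g ∈ G, TreeAutLike g)
    (hst : SphericallyTransitive G)
    (hwb : RigidStabilizersNontrivial G) :
    ∀ (k : ℕ) (t : ∀ i : Fin k, a i) (x : ∀ n, a n),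
      (∀ i : Fin k, x i = t i) →
        ∃ g ∈ G, (∀ y : ∀ n, a n, ¬ (∀ i : Fin k, y i = t i) → g y = y) ∧ g x ≠ x :=
  stmt8_general G haut hst hwb
end

section
/- Let G act by homeomorphisms on a Hausdorff space X and let w = u_n v_n ⋯ u_1 v_1 be a word with constants v_1,…,v_n ∈ G \ {1}. Suppose q ∈ X belongs to a set of the form v_r^{ε_r}⋯v_1^{ε_1}(O') and q avoids ⋃ V_w(cl(O') \ O'), where V_w(A) is the (finite) collection of all sets v_j^{ε_j}⋯v_1^{ε_1}(A) with ε_i ∈ {0,1}. Then there is an open neighbourhood O ⊆ v_r^{ε_r}⋯v_1^{ε_1}(O') of q such that for every V ∈ V_w(O'), if O ∩ V ≠ ∅ then O ⊆ V. -/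
/-!
Around a point `q` off the frontiers of finitely many sets, each of these sets either contains a
whole neighbourhood of `q` or misses one; intersecting these neighbourhoods with the prescribed
open set gives `O`. The sets `v_j^{δ_j}⋯v_1^{δ_1}(O')` are finitely many, since the map
`v_j^{δ_j}⋯v_1^{δ_1}` depends only on `δ_1, …, δ_j`, and their frontiers are the images of
`cl(O') \ O'` because these maps are homeomorphisms.
-/

/-- `chainE v ε j` is the composition `v_j^{ε_j} ∘ ⋯ ∘ v_1^{ε_1}` of homeomorphisms,
where `v^1 = v` and `v^0 = id`. -/
def chainE {X : Type*} [TopologicalSpace X] (v : ℕ → X ≃ₜ X) (ε : ℕ → Bool) :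
    ℕ → X → X
  | 0 => id
  | j + 1 => (fun x => if ε (j + 1) then v (j + 1) x else x) ∘ chainE v ε j

open Filter Topology

theorem eventually_mem_iff_of_notMem_frontier {X : Type*} [TopologicalSpace X] {V : Set X}
    {q : X} (hq : q ∉ frontier V) : ∀ᶠ x in 𝓝 q, (x ∈ V ↔ q ∈ V) := by
  by_cases hqV : q ∈ V
  · have hint : q ∈ interior V := by
      by_contra h
      exact hq ⟨subset_closure hqV, h⟩
    filter_upwards [mem_interior_iff_mem_nhds.mp hint] with x hx using iff_of_true hx hqV
  · have hcl : q ∉ closure V := fun h => hq ⟨h, fun h' => hqV (interior_subset h')⟩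
    filter_upwards [isClosed_closure.isOpen_compl.mem_nhds hcl] with x hx
    exact iff_of_false (fun h => hx (subset_closure h)) hqV

theorem exists_isOpen_subset_forall_inter_nonempty_imp_subset {X : Type*} [TopologicalSpace X]
    {𝒱 : Set (Set X)} (h𝒱 : 𝒱.Finite) {U : Set X} (hU : IsOpen U) {q : X} (hqU : q ∈ U)
    (hq : ∀ V ∈ 𝒱, q ∉ frontier V) :
    ∃ O : Set X, IsOpen O ∧ q ∈ O ∧ O ⊆ U ∧ ∀ V ∈ 𝒱, (O ∩ V).Nonempty → O ⊆ V := by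
  have hnear : ∀ᶠ x in 𝓝 q, x ∈ U ∧ ∀ V ∈ 𝒱, (x ∈ V ↔ q ∈ V) :=
    Filter.Eventually.and (hU.mem_nhds hqU) <|
      (eventually_all_finite h𝒱).mpr fun V hV => eventually_mem_iff_of_notMem_frontier (hq V hV)
  obtain ⟨O, hOnear, hO, hqO⟩ := eventually_nhds_iff.mp hnear
  refine ⟨O, hO, hqO, fun x hx => (hOnear x hx).1, fun V hV ⟨y, hyO, hyV⟩ x hx => ?_⟩
  exact ((hOnear x hx).2 V hV).mpr (((hOnear y hyO).2 V hV).mp hyV)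

section chainE

variable {X : Type*} [TopologicalSpace X] (v : ℕ → X ≃ₜ X)

theorem isHomeomorph_chainE (ε : ℕ → Bool) (j : ℕ) : IsHomeomorph (chainE v ε j) := by
  induction j with
  | zero => exact IsHomeomorph.id
  | succ j ih =>
    refine IsHomeomorph.comp ?_ ih
    cases ε (j + 1)
    · exact IsHomeomorph.id
    · exact (v (j + 1)).isHomeomorph

theorem finite_range_chainE (j : ℕ) : (Set.range fun ε => chainE v ε j).Finite := by
  induction j with
  | zero => exact (Set.finite_singleton id).subset (Set.range_subset_iff.mpr fun _ => rfl)
  | succ j ih =>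
    refine ((ih.prod (Set.finite_univ (α := Bool))).image
      fun p : (X → X) × Bool => (fun x => if p.2 then v (j + 1) x else x) ∘ p.1).subset ?_
    rintro _ ⟨ε, rfl⟩
    exact ⟨(chainE v ε j, ε (j + 1)), ⟨⟨ε, rfl⟩, trivial⟩, rfl⟩

end chainE

theorem stmt10_general {X : Type*} [TopologicalSpace X]
    (v : ℕ → X ≃ₜ X) (n r : ℕ)
    (O' : Set X) (hO' : IsOpen O') (ε : ℕ → Bool) (q : X)
    (hq : q ∈ chainE v ε r '' O')
    (havoid : ∀ j, 1 ≤ j → j ≤ n → ∀ δ : ℕ → Bool,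
      q ∉ chainE v δ j '' (closure O' \ O')) :
    ∃ O : Set X, IsOpen O ∧ q ∈ O ∧ O ⊆ chainE v ε r '' O' ∧
      ∀ j, 1 ≤ j → j ≤ n → ∀ δ : ℕ → Bool,
        (O ∩ chainE v δ j '' O').Nonempty → O ⊆ chainE v δ j '' O' := by
  set 𝒱 := ⋃ j ∈ Set.Icc 1 n, Set.range fun δ => chainE v δ j '' O'
  have h𝒱 : 𝒱.Finite := (Set.finite_Icc 1 n).biUnion fun j _ =>
    (Set.range_comp (· '' O') fun δ => chainE v δ j) ▸ (finite_range_chainE v j).image (· '' O')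
  have hfrontier : ∀ V ∈ 𝒱, q ∉ frontier V := by
    simp only [𝒱, Set.mem_iUnion, Set.mem_range]
    rintro _ ⟨j, ⟨hj1, hjn⟩, δ, rfl⟩
    rw [← (isHomeomorph_chainE v δ j).image_frontier, hO'.frontier_eq]
    exact havoid j hj1 hjn δ
  obtain ⟨O, hO, hqO, hOU, hOV⟩ := exists_isOpen_subset_forall_inter_nonempty_imp_subset h𝒱
    ((isHomeomorph_chainE v ε r).isOpenMap _ hO') hq hfrontier
  exact ⟨O, hO, hqO, hOU, fun j hj1 hjn δ =>
    hOV _ (Set.mem_biUnion ⟨hj1, hjn⟩ ⟨δ, rfl⟩)⟩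

/-- Claim M: Let homeomorphisms `v₁, …, v_n` of a Hausdorff space `X`
be given (the constants of a word `w`), let `O'` be open, and suppose
`q ∈ v_r^{ε_r}⋯v_1^{ε_1}(O')` avoids every member of the family
`V_w(cl(O') \ O') = { v_j^{δ_j}⋯v_1^{δ_1}(cl(O') \ O') }`. Then there is an open
neighbourhood `O ⊆ v_r^{ε_r}⋯v_1^{ε_1}(O')` of `q` such that every member `V` of
`V_w(O')` meeting `O` contains `O`. -/
theorem stmt10 {X : Type*} [TopologicalSpace X] [T2Space X]
    (v : ℕ → X ≃ₜ X) (n r : ℕ) (hr : r ≤ n)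
    (O' : Set X) (hO' : IsOpen O') (ε : ℕ → Bool) (q : X)
    (hq : q ∈ chainE v ε r '' O')
    (havoid : ∀ j, 1 ≤ j → j ≤ n → ∀ δ : ℕ → Bool,
      q ∉ chainE v δ j '' (closure O' \ O')) :
    ∃ O : Set X, IsOpen O ∧ q ∈ O ∧ O ⊆ chainE v ε r '' O' ∧
      ∀ j, 1 ≤ j → j ≤ n → ∀ δ : ℕ → Bool,
        (O ∩ chainE v δ j '' O').Nonempty → O ⊆ chainE v δ j '' O' :=
  stmt10_general v n r O' hO' ε q hq havoid
end

section
/- Let G act by homeomorphisms on a Hausdorff space X and let w(ȳ) ∈ F_t * G be a word in the form u_n v_n ⋯ u_1 v_1 with constants v_i ∈ G \ {1}. If w has non-trivial product of constants (v_n ⋯ v_1 ≠ 1), then w is oscillating: either w is explicitly oscillating, or the Transition procedure produces a non-empty family P^os of open sets on which derived words are explicitly oscillating. -/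
section

variable (G X : Type*) [Group G] [MulAction G X]

/-- The support of `g` acting on `X`. -/
def mSupp (g : G) : Set X := {x : X | g • x ≠ x}

/-- The set of points of `X` fixed by every element of `G`. -/
def fixSet : Set X := {x : X | ∀ g : G, g • x = x}

variable [TopologicalSpace X]

/-- `supp(g)⁰ = int(X \ (supp(g) ∪ Fix(G)))`. -/
def supp0 (g : G) : Set X := interior ((mSupp G X g ∪ fixSet G X)ᶜ)

/-- `O_w` for the word with list of constants `[v₁, …, v_n]` (first applied first):
`p ∈ O_w` iff each constant moves the current point along the trajectory, i.e.
`O_w = ⋂_{i} v₁⁻¹⋯v_i⁻¹(supp(v_{i+1}))`. -/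
def OwL : List G → Set X
  | [] => Set.univ
  | v :: rest => mSupp G X v ∩ (fun x : X => v • x) ⁻¹' OwL rest

/-- The region `X_{ε̄} = ⋂_i v₁⁻¹⋯v_{i-1}⁻¹(supp(v_i)^{ε_i})`, where
`supp(v)¹ = supp(v) \ Fix(G)` and `supp(v)⁰ = int(X \ (supp(v) ∪ Fix(G)))`. -/
def XepsL : List G → List Bool → Set X
  | [], _ => Set.univ
  | _ :: _, [] => Set.univ
  | v :: vs, e :: es =>
      (if e then mSupp G X v \ fixSet G X else supp0 G X v) ∩
        (fun x : X => v • x) ⁻¹' XepsL vs es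

/-- The list of constants kept by `ε̄` (those with `ε_i = 1`); the others are deleted
in the word `w'_{X_{ε̄}}` produced by the Transition procedure. -/
def keepL : List G → List Bool → List G
  | [], _ => []
  | _ :: _, [] => []
  | v :: vs, e :: es => if e then v :: keepL vs es else keepL vs es

/-- The word with constants `vs` is oscillating on the region `V`: either it is
explicitly oscillating in `V` (`V ∩ O_w ≠ ∅`), or some step of the Transition
procedure (restriction to a region `X_{ε̄}`, deletion of the constants with
`ε_i = 0`) leads to a word explicitly oscillating on a non-empty subregion. -/
inductive Osc : List G → Set X → Prop
  | expl (vs : List G) (V : Set X) :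
      vs ≠ [] → (V ∩ OwL G X vs).Nonempty → Osc vs V
  | step (vs : List G) (V : Set X) (ε : List Bool) :
      ε.length = vs.length → (V ∩ XepsL G X vs ε).Nonempty →
      Osc (keepL G vs ε) (V ∩ XepsL G X vs ε) → Osc vs V

end

/-!
Pick a point `p` moved by `v_n ⋯ v_1` whose trajectory `p, v_1 p, v_2 v_1 p, …` avoids the
frontiers of the supports of the constants; such points are dense because these frontiers are
closed and nowhere dense. If every `v_i` moves the current point, `p ∈ O_w`. Otherwise the signs
`ε_i = [v_i moves the current point]` give a region `X_ε̄` containing `p` (avoiding frontiers puts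
`p` in the interior needed when `ε_i = 0`), and deleting the constants that fix the current point
does not change where `p` is sent, so the derived word is shorter and still moves `p`: induct on
the number of constants.
-/

section Oscillation

open Set

lemma length_keepL_le {G : Type*} (vs : List G) (ε : List Bool) :
    (keepL G vs ε).length ≤ vs.length := by
  induction vs generalizing ε with
  | nil => simp [keepL]
  | cons v vs ih =>
    cases ε with
    | nil => simp [keepL]
    | cons e es => cases e <;> simp [keepL, Nat.le_succ_of_le, ih es]

variable {G X : Type*} [Group G] [MulAction G X]

lemma mem_mSupp {g : G} {x : X} : x ∈ mSupp G X g ↔ g • x ≠ x := Iff.rfl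

lemma smul_notMem_fixSet {p : X} (hp : p ∉ fixSet G X) (g : G) : g • p ∉ fixSet G X := by
  intro hfix
  have hgp : g • p = p := by simpa using (hfix g⁻¹).symm
  exact hp fun k => by rw [← hgp]; exact hfix k

open Classical in
noncomputable def movingSigns : List G → X → List Bool
  | [], _ => []
  | v :: vs, p => decide (v • p ≠ p) :: movingSigns vs (v • p)

lemma length_movingSigns (vs : List G) (p : X) : (movingSigns vs p).length = vs.length := by
  induction vs generalizing p with
  | nil => rfl
  | cons v vs ih => simp [movingSigns, ih]

lemma prod_keepL_movingSigns_smul (vs : List G) (p : X) :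
    (keepL G vs (movingSigns vs p)).reverse.prod • p = vs.reverse.prod • p := by
  induction vs generalizing p with
  | nil => rfl
  | cons v vs ih =>
    by_cases h : v • p = p <;> simp [movingSigns, keepL, h, mul_smul, ih]

lemma length_keepL_movingSigns_lt {vs : List G} {p : X} (hp : p ∉ OwL G X vs) :
    (keepL G vs (movingSigns vs p)).length < vs.length := by
  induction vs generalizing p with
  | nil => exact absurd trivial hp
  | cons v vs ih =>
    by_cases h : v • p = p
    · simpa [movingSigns, keepL, h] using Nat.lt_succ_of_le (length_keepL_le vs _)
    · have hp' : v • p ∉ OwL G X vs := fun hv => hp ⟨h, hv⟩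
      simpa [movingSigns, keepL, h] using ih hp'

variable [TopologicalSpace X] [ContinuousConstSMul G X]

def frontierAvoiding : List G → Set X
  | [] => univ
  | v :: vs => (frontier (mSupp G X v))ᶜ ∩ (fun x : X => v • x) ⁻¹' frontierAvoiding vs

variable [T2Space X]

lemma isOpen_mSupp (g : G) : IsOpen (mSupp G X g) :=
  isOpen_ne_fun (continuous_const_smul g) continuous_id

lemma isClosed_fixSet : IsClosed (fixSet G X) := by
  simp only [fixSet, ofPred_forall]
  exact isClosed_iInter fun g => isClosed_eq (continuous_const_smul g) continuous_id

lemma isOpen_XepsL (vs : List G) (ε : List Bool) : IsOpen (XepsL G X vs ε) := by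
  induction vs generalizing ε with
  | nil => exact isOpen_univ
  | cons v vs ih =>
    cases ε with
    | nil => exact isOpen_univ
    | cons e es =>
      refine IsOpen.inter ?_ ((ih es).preimage (continuous_const_smul v))
      cases e
      · exact isOpen_interior
      · exact (isOpen_mSupp v).sdiff isClosed_fixSet

lemma dense_frontierAvoiding (vs : List G) : Dense (frontierAvoiding (X := X) vs) := by
  induction vs with
  | nil => exact dense_univ
  | cons v vs ih =>
    have hfront : Dense (frontier (mSupp G X v))ᶜ := by
      rw [← interior_eq_empty_iff_dense_compl, ← frontier_compl]
      exact interior_frontier (isOpen_mSupp v).isClosed_compl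
    exact hfront.inter_of_isOpen_left (ih.preimage (isOpenMap_smul v))
      isClosed_frontier.isOpen_compl

lemma mem_supp0_of_notMem_frontier {v : G} {p : X} (hfront : p ∉ frontier (mSupp G X v))
    (hfixed : v • p = p) (hfix : p ∉ fixSet G X) : p ∈ supp0 G X v := by
  have hcl : p ∉ closure (mSupp G X v) := fun hc =>
    hfront ⟨hc, by rw [(isOpen_mSupp v).interior_eq]; exact fun h => h hfixed⟩
  have hsub : (closure (mSupp G X v) ∪ fixSet G X)ᶜ ⊆ (mSupp G X v ∪ fixSet G X)ᶜ :=
    compl_subset_compl.2 (union_subset_union_left _ subset_closure)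
  exact interior_maximal hsub (isClosed_closure.union isClosed_fixSet).isOpen_compl
    (by simp [hcl, hfix])

lemma mem_XepsL_movingSigns {vs : List G} {p : X} (hp : p ∈ frontierAvoiding vs)
    (hfix : p ∉ fixSet G X) : p ∈ XepsL G X vs (movingSigns vs p) := by
  induction vs generalizing p with
  | nil => trivial
  | cons v vs ih =>
    have htail := ih hp.2 (smul_notMem_fixSet hfix v)
    by_cases h : v • p = p
    · simp only [movingSigns, h, ne_eq, not_true_eq_false, decide_false]
      exact ⟨mem_supp0_of_notMem_frontier hp.1 h hfix, by simpa [h] using htail⟩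
    · simp only [movingSigns, h, ne_eq, not_false_eq_true, decide_true]
      exact ⟨⟨h, hfix⟩, htail⟩

theorem osc_of_isOpen_of_inter_mSupp_prod_nonempty {vs : List G} {V : Set X} (hV : IsOpen V)
    (hprod : (V ∩ mSupp G X vs.reverse.prod).Nonempty) : Osc G X vs V := by
  obtain ⟨p, havoid, hpV, hmoved⟩ :=
    (dense_frontierAvoiding vs).exists_mem_open (hV.inter (isOpen_mSupp _)) hprod
  by_cases hO : p ∈ OwL G X vs
  · have hne : vs ≠ [] := by rintro rfl; exact hmoved (one_smul G p)
    exact .expl vs V hne ⟨p, hpV, hO⟩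
  have hpX : p ∈ XepsL G X vs (movingSigns vs p) :=
    mem_XepsL_movingSigns havoid fun hfix => hmoved (hfix _)
  have hmoved' : p ∈ mSupp G X (keepL G vs (movingSigns vs p)).reverse.prod := by
    rwa [mem_mSupp, prod_keepL_movingSigns_smul]
  exact .step vs V _ (length_movingSigns vs p) ⟨p, hpV, hpX⟩
    (osc_of_isOpen_of_inter_mSupp_prod_nonempty (hV.inter (isOpen_XepsL _ _))
      ⟨p, ⟨hpV, hpX⟩, hmoved'⟩)
termination_by vs.length
decreasing_by exact length_keepL_movingSigns_lt hO

end Oscillation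

theorem stmt13_general {G X : Type*} [Group G] [MulAction G X] [TopologicalSpace X] [T2Space X]
    (hcont : ∀ g : G, Continuous fun x : X => g • x)
    (vs : List G)
    (hprod : (mSupp G X vs.reverse.prod).Nonempty) :
    Osc G X vs Set.univ :=
  haveI : ContinuousConstSMul G X := ⟨hcont⟩
  osc_of_isOpen_of_inter_mSupp_prod_nonempty isOpen_univ (by rwa [Set.univ_inter])

/-- Proposition 3.6: Let `G` act by homeomorphisms on a Hausdorff
space `X` (with finite fixed-point set, as assumed for the Transition procedure) and
let `w(ȳ) = u_n v_n ⋯ u_1 v_1` be a word with non-trivial constants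
`vs = [v₁, …, v_n]`. If `w` has non-trivial product of constants, i.e. `v_n ⋯ v_1`
has non-empty support in `X`, then `w` is oscillating. -/
theorem stmt13 {G X : Type*} [Group G] [MulAction G X] [TopologicalSpace X] [T2Space X]
    (hcont : ∀ g : G, Continuous fun x : X => g • x)
    (hfix : (fixSet G X).Finite)
    (vs : List G) (hne : vs ≠ []) (hv : ∀ v ∈ vs, v ≠ 1)
    (hprod : (mSupp G X vs.reverse.prod).Nonempty) :
    Osc G X vs Set.univ :=
  stmt13_general hcont vs hprod
end

section
/- In Thompson's group F with its standard action on [0,1], the word w₁(y) = y x₁ y⁻¹ x₂ y² x₁⁻¹ is explicitly oscillating: the set O_{w₁} = x₁x₂⁻¹((1/2,1)) ∩ x₁((3/4,1)) ∩ (1/2,1) equals (5/8,1), which is non-empty. -/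
open scoped Classical

/-- The standard generator `x_n` of Thompson's group `F` as a piecewise linear map
(extended to all of `ℝ` by its outermost linear pieces, so that it is a bijection of
`ℝ` restricting to the usual generator on `[0,1]`). -/
noncomputable def xF (n : ℕ) (t : ℝ) : ℝ :=
  if t ≤ ((2 : ℝ) ^ n - 1) / 2 ^ n then t
  else if t ≤ ((2 : ℝ) ^ (n + 1) - 1) / 2 ^ (n + 1) then
    t / 2 + ((2 : ℝ) ^ n - 1) / 2 ^ (n + 1)
  else if t ≤ ((2 : ℝ) ^ (n + 2) - 1) / 2 ^ (n + 2) then t - 1 / 2 ^ (n + 2)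
  else 2 * t - 1

/-!
`x₂` is the identity up to `3/4` and preserves `(3/4, 1)`, so `x₂⁻¹((1/2, 1)) ⊇ (1/2, 1)`,
and `x₁` maps `(3/4, 1)` onto `(5/8, 1) ⊆ (1/2, 1)`. Hence the middle set `x₁((3/4, 1))`
of the intersection is contained in the other two.
-/

open Set

lemma xF_apply (n : ℕ) (t : ℝ) :
    xF n t =
      if t ≤ 1 - (2 ^ n)⁻¹ then t
      else if t ≤ 1 - (2 ^ n)⁻¹ / 2 then t / 2 + (1 - (2 ^ n)⁻¹) / 2
      else if t ≤ 1 - (2 ^ n)⁻¹ / 4 then t - (2 ^ n)⁻¹ / 4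
      else 2 * t - 1 := by
  have h₀ : ((2 : ℝ) ^ n - 1) / 2 ^ n = 1 - (2 ^ n)⁻¹ := by field_simp
  have h₁ : ((2 : ℝ) ^ (n + 1) - 1) / 2 ^ (n + 1) = 1 - (2 ^ n)⁻¹ / 2 := by
    rw [pow_succ]; field_simp
  have h₂ : ((2 : ℝ) ^ (n + 2) - 1) / 2 ^ (n + 2) = 1 - (2 ^ n)⁻¹ / 4 := by
    rw [pow_add]; field_simp; ring
  have h₃ : ((2 : ℝ) ^ n - 1) / 2 ^ (n + 1) = (1 - (2 ^ n)⁻¹) / 2 := by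
    rw [pow_succ]; field_simp
  have h₄ : 1 / (2 : ℝ) ^ (n + 2) = (2 ^ n)⁻¹ / 4 := by
    rw [pow_add]; field_simp; ring
  simp only [xF, h₀, h₁, h₂, h₃, h₄]

lemma mapsTo_xF_Ioo {n : ℕ} {c : ℝ} (hc : c ≤ 1 - (2 ^ n)⁻¹) :
    MapsTo (xF n) (Ioo c 1) (Ioo c 1) := by
  rintro t ⟨hct, ht1⟩
  have ha : (0 : ℝ) < (2 ^ n)⁻¹ := by positivity
  rw [xF_apply]
  split_ifs <;> constructor <;> linarith

lemma image_xF_Ioo (n : ℕ) :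
    xF n '' Ioo (1 - (2 ^ n)⁻¹ / 2) 1 = Ioo (1 - 3 * (2 ^ n)⁻¹ / 4) 1 := by
  set a : ℝ := (2 ^ n)⁻¹ with ha_def
  have ha : 0 < a := by positivity
  ext s
  constructor
  · rintro ⟨t, ⟨ht, ht1⟩, rfl⟩
    rw [xF_apply, ← ha_def]
    split_ifs <;> constructor <;> linarith
  · rintro ⟨hs, hs1⟩
    by_cases hs' : s ≤ 1 - a / 2
    · refine ⟨s + a / 4, ⟨by linarith, by linarith⟩, ?_⟩
      rw [xF_apply, ← ha_def]
      split_ifs <;> linarith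
    · refine ⟨(s + 1) / 2, ⟨by linarith, by linarith⟩, ?_⟩
      rw [xF_apply, ← ha_def]
      split_ifs <;> linarith

/-- in Thompson's group `F` acting on `[0,1]`, the word
`w₁(y) = y x₁ y⁻¹ x₂ y² x₁⁻¹` is explicitly oscillating: its oscillation set
`O_{w₁} = x₁x₂⁻¹((1/2,1)) ∩ x₁((3/4,1)) ∩ (1/2,1)` equals `(5/8,1)`, which is
non-empty. Here `supp(x₁) = (1/2,1)` and `supp(x₂) = (3/4,1)`, and `x₂⁻¹(A)` is the
preimage of `A` under `x₂`. -/
theorem stmt14 :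
    (xF 1 '' (xF 2 ⁻¹' Set.Ioo (1 / 2 : ℝ) 1)) ∩ (xF 1 '' Set.Ioo (3 / 4 : ℝ) 1) ∩
        Set.Ioo (1 / 2 : ℝ) 1
      = Set.Ioo (5 / 8 : ℝ) 1 ∧
    (Set.Ioo (5 / 8 : ℝ) 1).Nonempty := by
  have hx₁ : xF 1 '' Ioo (3 / 4) 1 = Ioo (5 / 8) 1 := by
    convert image_xF_Ioo 1 using 2 <;> norm_num
  have hx₂ : Ioo (1 / 2 : ℝ) 1 ⊆ xF 2 ⁻¹' Ioo (1 / 2) 1 :=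
    (mapsTo_xF_Ioo (by norm_num)).subset_preimage
  have hsub₁ : xF 1 '' Ioo (3 / 4) 1 ⊆ xF 1 '' (xF 2 ⁻¹' Ioo (1 / 2) 1) :=
    image_mono ((Ioo_subset_Ioo_left (by norm_num)).trans hx₂)
  have hsub₂ : Ioo (5 / 8 : ℝ) 1 ⊆ Ioo (1 / 2) 1 := Ioo_subset_Ioo_left (by norm_num)
  rw [inter_eq_right.2 hsub₁, hx₁, inter_eq_left.2 hsub₂]
  exact ⟨rfl, nonempty_Ioo.2 (by norm_num)⟩
end

section
/- Lemma on transition (Lemma 3.7): Let G act by homeomorphisms on a Hausdorff space X and let w_X(ȳ) be a word with constants v_{X,1},…,v_{X,n}. Suppose U is an open set produced at step k of the Transition procedure, with associated word w_U(ȳ), and suppose ḡ ∈ G^t and p ∈ U satisfy w_U(ḡ)(p) ≠ p. If every g_i stabilizes setwise each set of the form v_{X,j}^{ε_j}⋯v_{X,1}^{ε_1}(U) for all choices (ε_1,…,ε_j) ∈ {0,1}^j, 1 ≤ j ≤ n, then w_X(ḡ) ≠ 1. -/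
section

variable {G X : Type*} [Group G] [MulAction G X] {t : ℕ}

/-- Evaluation at `ḡ` of a word with constants `w = u_n v_n ⋯ u_1 v_1`, encoded as the
list of blocks `[(u₁, v₁), …, (u_n, v_n)]` with `uᵢ ∈ F_t` and `vᵢ ∈ G`. -/
def evalWordC (g : Fin t → G) : List (FreeGroup (Fin t) × G) → G
  | [] => 1
  | (u, v) :: rest => evalWordC g rest * (FreeGroup.lift g) u * v

/-- Evaluation at `ḡ` of the derived word `w_{ε̄}` in which each constant `vᵢ` is
replaced by `vᵢ^{ε_i}` (`v¹ = v`, `v⁰ = 1`); reductions in `F_t * G` do not change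
this value. -/
def evalWordEps (g : Fin t → G) : List (FreeGroup (Fin t) × G) → List Bool → G
  | [], _ => 1
  | _ :: _, [] => 1
  | (u, v) :: rest, e :: es =>
      evalWordEps g rest es * (FreeGroup.lift g) u * (if e then v else 1)

/-- `condChain [v₁,…,v_j] [δ₁,…,δ_j]` is the map `v_j^{δ_j} ∘ ⋯ ∘ v_1^{δ_1}`. -/
def condChain : List G → List Bool → X → X
  | [], _, x => x
  | _ :: _, [], x => x
  | v :: vs, e :: es, x => condChain vs es ((if e then v else (1 : G)) • x)

end

open Pointwise

section

variable {G X : Type*} [Group G] [MulAction G X]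

lemma smul_eq_self_of_mem_supp0 [TopologicalSpace X] {v : G} {x : X} (hx : x ∈ supp0 G X v) :
    v • x = x :=
  not_not.mp fun hmoved => interior_subset hx (Or.inl hmoved)

lemma smul_eq_ite_smul_of_mem_XepsL [TopologicalSpace X] {v : G} {vs : List G} {e : Bool}
    {es : List Bool} {x : X} (hx : x ∈ XepsL G X (v :: vs) (e :: es)) :
    v • x = (if e then v else 1) • x := by
  cases e
  · simpa using smul_eq_self_of_mem_supp0 hx.1
  · simp

lemma image_condChain_cons (v : G) (vs : List G) (e : Bool) (es : List Bool) (S : Set X) :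
    condChain (v :: vs) (e :: es) '' S = condChain vs es '' ((if e then v else 1) • S) := by
  rw [← Set.image_smul, Set.image_image]
  rfl

lemma FreeGroup.lift_mem_stabilizer {t : ℕ} {g : Fin t → G} {S : Set X}
    (hS : ∀ i, g i ∈ MulAction.stabilizer G S) (w : FreeGroup (Fin t)) :
    FreeGroup.lift g w ∈ MulAction.stabilizer G S :=
  FreeGroup.range_lift_le (Set.range_subset_iff.2 hS) ⟨w, rfl⟩

/-- Along the evaluation at `p`, `ḡ` keeps the running point inside the successive images of
`S`, so the point reached just before a constant `vᵢ` with `εᵢ = 0` lies outside `supp(vᵢ)`. -/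
theorem evalWordC_smul_eq_evalWordEps_smul [TopologicalSpace X] {t : ℕ} (g : Fin t → G) :
    ∀ (blocks : List (FreeGroup (Fin t) × G)) (ε : List Bool) (S : Set X),
      ε.length = blocks.length → S ⊆ XepsL G X (blocks.map Prod.snd) ε →
      (∀ (i : Fin t) (j : ℕ) (δ : List Bool),
        g i ∈ MulAction.stabilizer G (condChain ((blocks.map Prod.snd).take j) δ '' S)) →
      ∀ p ∈ S, evalWordC g blocks • p = evalWordEps g blocks ε • p
  | [], _, _, _, _, _, p, _ => by simp [evalWordC, evalWordEps]
  | (u, v) :: rest, e :: es, S, hlen, hS, hstab, p, hp => by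
    set c : G := if e then v else 1
    have hstab' : ∀ (i : Fin t) (j : ℕ) (δ : List Bool),
        g i ∈ MulAction.stabilizer G (condChain ((rest.map Prod.snd).take j) δ '' (c • S)) := by
      intro i j δ
      have := hstab i (j + 1) (e :: δ)
      rwa [List.map_cons, List.take_succ_cons, image_condChain_cons] at this
    have hS' : c • S ⊆ XepsL G X (rest.map Prod.snd) es := by
      rintro _ ⟨q, hq, rfl⟩
      simpa [c, ← smul_eq_ite_smul_of_mem_XepsL (hS hq)] using (hS hq).2
    have hcS : ∀ i, g i ∈ MulAction.stabilizer G (c • S) := by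
      simpa [condChain] using fun i => hstab' i 0 []
    have hp' : FreeGroup.lift g u • c • p ∈ c • S := by
      rw [← FreeGroup.lift_mem_stabilizer hcS u]
      exact Set.smul_mem_smul_set (Set.smul_mem_smul_set hp)
    have ih := evalWordC_smul_eq_evalWordEps_smul g rest es (c • S) (by simpa using hlen) hS'
      hstab' _ hp'
    calc evalWordC g ((u, v) :: rest) • p = evalWordC g rest • FreeGroup.lift g u • c • p := by
          simp [evalWordC, mul_smul, c, ← smul_eq_ite_smul_of_mem_XepsL (hS hp)]
      _ = evalWordEps g rest es • FreeGroup.lift g u • c • p := ih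
      _ = evalWordEps g ((u, v) :: rest) (e :: es) • p := by
          simp only [evalWordEps, mul_smul, c]

end

theorem stmt16_general {G X : Type*} [Group G] [MulAction G X] [TopologicalSpace X]
    {t : ℕ} (blocks : List (FreeGroup (Fin t) × G))
    (ε : List Bool) (hlen : ε.length = blocks.length)
    (U : Set X)
    (hU : U ⊆ XepsL G X (blocks.map Prod.snd) ε)
    (g : Fin t → G) (p : X) (hp : p ∈ U)
    (hstab : ∀ (i : Fin t) (j : ℕ) (δ : List Bool),
      (fun x : X => g i • x) '' (condChain ((blocks.map Prod.snd).take j) δ '' U) =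
        condChain ((blocks.map Prod.snd).take j) δ '' U)
    (hmove : evalWordEps g blocks ε • p ≠ p) :
    evalWordC g blocks ≠ 1 := by
  intro hone
  have := evalWordC_smul_eq_evalWordEps_smul g blocks ε U hlen hU hstab p hp
  rw [hone, one_smul] at this
  exact hmove this.symm

/-- Lemma 3.7: Let `G` act by homeomorphisms on a Hausdorff space `X`
and let `w_X(ȳ)` be a word with constants `v₁, …, v_n`, encoded as blocks
`[(u₁, v₁), …, (u_n, v_n)]`. Let `U` be an open set produced by the Transition
procedure (so `U ⊆ X_{ε̄}` for the cumulative `ε̄`), with associated derived word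
`w_U` (the word with each `vᵢ` replaced by `vᵢ^{ε_i}`), and suppose `ḡ ∈ G^t` and
`p ∈ U` satisfy `w_U(ḡ)(p) ≠ p`. If every `gᵢ` stabilizes setwise each set of the
form `v_j^{δ_j}⋯v_1^{δ_1}(U)` for all `(δ_1,…,δ_j) ∈ {0,1}^j`, then `w_X(ḡ) ≠ 1`. -/
theorem stmt16 {G X : Type*} [Group G] [MulAction G X] [TopologicalSpace X] [T2Space X]
    (hcont : ∀ g : G, Continuous fun x : X => g • x)
    {t : ℕ} (blocks : List (FreeGroup (Fin t) × G))
    (hblocks : ∀ b ∈ blocks, b.2 ≠ 1)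
    (ε : List Bool) (hlen : ε.length = blocks.length)
    (U : Set X) (hUopen : IsOpen U)
    (hU : U ⊆ XepsL G X (blocks.map Prod.snd) ε)
    (g : Fin t → G) (p : X) (hp : p ∈ U)
    (hstab : ∀ (i : Fin t) (j : ℕ) (δ : List Bool),
      (fun x : X => g i • x) '' (condChain ((blocks.map Prod.snd).take j) δ '' U) =
        condChain ((blocks.map Prod.snd).take j) δ '' U)
    (hmove : evalWordEps g blocks ε • p ≠ p) :
    evalWordC g blocks ≠ 1 :=
  stmt16_general blocks ε hlen U hU g p hp hstab hmove
end
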